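/- Let k be an algebraically closed field of characteristic ≠ 2, with i a square root of −1. The subgroup of PGL(2,k) generated by the classes of [[1,0],[0,-1]], [[0,1],[1,0]], [[1,i],[1,-i]], and [[i,0],[0,1]] is isomorphic to the symmetric group S₄ of order 24, and the subgroup generated by the first three of these matrices is a normal subgroup of it isomorphic to A₄. -/

import Mathlib

open scoped LinearAlgebra.Projectivization
open Matrix Projectivization

noncomputable section

/-- The projective general linear group `PGL(2,k)`: `GL(2,k)` modulo its center. -/
abbrev PGL2 (k : Type) [Field k] : Type := GL (Fin 2) k ⧸ Subgroup.center (GL (Fin 2) k)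

variable {k : Type} [Field k]

open scoped Classical in
/-- The class in `PGL(2,k)` of a nonsingular 2×2 matrix (junk value `1` if singular). -/
def pgl (M : Matrix (Fin 2) (Fin 2) k) : PGL2 k :=
  if h : M.det ≠ 0 then QuotientGroup.mk (Matrix.GeneralLinearGroup.mkOfDetNeZero M h)
  else 1

/-- The projective line `P¹(k)`. -/
abbrev P1 (k : Type) [Field k] := ℙ k (Fin 2 → k)

/-- The linear automorphism of `k²` given by a matrix in `GL(2,k)`. -/
def glLinEquiv (g : GL (Fin 2) k) : (Fin 2 → k) ≃ₗ[k] (Fin 2 → k) :=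
  LinearMap.GeneralLinearGroup.generalLinearEquiv k (Fin 2 → k)
    (Matrix.GeneralLinearGroup.toLin g)

lemma glLinEquiv_apply (g : GL (Fin 2) k) (v : Fin 2 → k) :
    glLinEquiv g v = Matrix.mulVecLin g.val v := rfl

/-- `GL(2,k)` acts on `P¹(k)` by fractional linear transformations. -/
instance glAction : MulAction (GL (Fin 2) k) (P1 k) where
  smul g x := x.map (glLinEquiv g).toLinearMap (glLinEquiv g).injective
  one_smul x := by
    show Projectivization.map _ _ x = x
    have h1 : glLinEquiv (1 : GL (Fin 2) k) = LinearEquiv.refl k _ := by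
      simp only [glLinEquiv, _root_.map_one]; rfl
    induction' x using Projectivization.ind with v hv
    rw [Projectivization.map_mk]
    simp [h1]
  mul_smul g h x := by
    show Projectivization.map _ _ x =
      Projectivization.map _ _ (Projectivization.map _ _ x)
    have hgh : glLinEquiv (g * h) = (glLinEquiv h).trans (glLinEquiv g) := by
      simp only [glLinEquiv, _root_.map_mul]; rfl
    induction' x using Projectivization.ind with v hv
    simp only [Projectivization.map_mk, hgh]
    rfl

lemma gl_smul_mk (g : GL (Fin 2) k) (v : Fin 2 → k) (hv : v ≠ 0) :
    g • Projectivization.mk k v hv =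
      Projectivization.mk k (glLinEquiv g v) ((glLinEquiv g).map_ne_zero_iff.mpr hv) :=
  rfl

/-- Central (i.e. scalar) matrices act trivially on `P¹(k)`. -/
lemma central_smul_triv (c : GL (Fin 2) k) (hc : c ∈ Subgroup.center (GL (Fin 2) k))
    (x : P1 k) : c • x = x := by
  obtain ⟨r, hr⟩ : c.val ∈ Set.range (Matrix.scalar (Fin 2)) := by
    refine Matrix.mem_range_scalar_of_commute_transvectionStruct (fun t => ?_)
    have htGL : (Matrix.GeneralLinearGroup.mkOfDetNeZero t.toMatrix
        (by rw [t.det]; exact one_ne_zero) : GL (Fin 2) k) * c =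
        c * Matrix.GeneralLinearGroup.mkOfDetNeZero t.toMatrix
        (by rw [t.det]; exact one_ne_zero) :=
      (Subgroup.mem_center_iff.mp hc) _
    exact congrArg Units.val htGL
  have hr0 : r ≠ 0 := by
    rintro rfl
    have hu : IsUnit c.val.det := (Matrix.isUnit_iff_isUnit_det _).mp c.isUnit
    rw [← hr] at hu
    simp at hu
  induction' x using Projectivization.ind with v hv
  rw [gl_smul_mk]
  apply (Projectivization.mk_eq_mk_iff' k _ _ _ hv).mpr
  refine ⟨r, ?_⟩
  rw [glLinEquiv_apply, ← hr]
  funext j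
  simp [Matrix.mulVec_diagonal]

/-- The action of `GL(2,k)` on `P¹(k)` descends to `PGL(2,k)`. -/
instance pglAction : MulAction (PGL2 k) (P1 k) where
  smul g x := Quotient.liftOn' g (fun A => A • x) (by
    intro a b hab
    rw [QuotientGroup.leftRel_apply] at hab
    have : b = a * (a⁻¹ * b) := by group
    show a • x = b • x
    rw [this, SemigroupAction.mul_smul, central_smul_triv _ hab])
  one_smul x := by
    show (1 : GL (Fin 2) k) • x = x
    exact MulAction.one_smul x
  mul_smul a b x := by
    refine Quotient.inductionOn₂' a b (fun A B => ?_)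
    show (A * B) • x = A • (B • x)
    exact SemigroupAction.mul_smul A B x

/-- The point `(a : 1)` of `P¹(k)`. -/
def pt (a : k) : P1 k := Projectivization.mk k ![a, 1] (by
  intro h; simpa using congrFun h 1)

/-- The point at infinity `(1 : 0)` of `P¹(k)`. -/
def inftyPt : P1 k := Projectivization.mk k ![1, 0] (by
  intro h; simpa using congrFun h 0)

/-!
The six points `0, ∞, ±1, ±i` of `P¹(k)` are the vertices of an octahedron, and the four
generators `z ↦ -z`, `z ↦ 1/z`, `z ↦ (z + i)/(z - i)`, `z ↦ iz` permute them. An element of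
`PGL(2,k)` fixing `0`, `1` and `∞` is trivial, so `G` acts faithfully on the vertices. These vertex
permutations also permute the four pairs of opposite faces, and the only nontrivial vertex
permutation fixing all four pairs is the antipodal map. The antipodal map is not in the image of
`G`: on each generator the signs of the actions on vertices and on face pairs agree, on the
antipodal map they differ. Hence `G` embeds into `S₄` through its action on face pairs. The images
of the four generators generate `S₄` and those of the first three generate `A₄`, so this
isomorphism carries `H` onto the normal subgroup `A₄`.
-/

open Equiv Equiv.Perm
open scoped Pointwise

namespace MulAction

variable {Γ X ι : Type*} [Group Γ] [MulAction Γ X] {q : ι → X}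

theorem mem_stabilizer_range_of_smul_eq {g : Γ} {σ : Perm ι} (h : ∀ j, g • q j = q (σ j)) :
    g ∈ stabilizer Γ (Set.range q) := by
  rw [mem_stabilizer_iff, Set.smul_set_range, funext h]
  exact σ.surjective.range_comp q

variable (hq : Function.Injective q)

def stabilizerPerm : stabilizer Γ (Set.range q) →* Perm ι :=
  (Equiv.ofInjective q hq).symm.permCongrHom.toMonoidHom.comp (toPermHom _ (Set.range q))

theorem smul_eq_stabilizerPerm (g : stabilizer Γ (Set.range q)) (j : ι) :
    (g : Γ) • q j = q (stabilizerPerm hq g j) :=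
  (Equiv.apply_ofInjective_symm hq (g • ⟨q j, j, rfl⟩)).symm

theorem stabilizerPerm_eq {g : stabilizer Γ (Set.range q)} {σ : Perm ι}
    (h : ∀ j, (g : Γ) • q j = q (σ j)) : stabilizerPerm hq g = σ :=
  Equiv.ext fun j => hq (by rw [← smul_eq_stabilizerPerm hq, h])

theorem stabilizerPerm_eq_one_iff {g : stabilizer Γ (Set.range q)} :
    stabilizerPerm hq g = 1 ↔ ∀ j, (g : Γ) • q j = q j :=
  ⟨fun h j => by rw [smul_eq_stabilizerPerm hq, h, one_apply], fun h => stabilizerPerm_eq hq h⟩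

end MulAction

namespace MonoidHom

variable {Γ Δ : Type*} [Group Γ] [Group Δ]

theorem range_le_of_closure_eq {G : Subgroup Γ} (f : G →* Δ) {T : Set Γ}
    (hT : Subgroup.closure T = G) {K : Subgroup Δ} (h : ∀ g (hg : g ∈ G), g ∈ T → f ⟨g, hg⟩ ∈ K) :
    f.range ≤ K := by
  subst hT
  rw [range_eq_map, ← Subgroup.closure_preimage_eq_top, MonoidHom.map_closure,
    Subgroup.closure_le]
  rintro _ ⟨g, hg, rfl⟩
  exact h g g.2 hg

end MonoidHom

theorem Subgroup.normal_subgroupOf_of_range_comp_inclusion {Γ P : Type*} [Group Γ] [Group P]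
    {G H : Subgroup Γ} (hHG : H ≤ G) {F : G →* P} (hF : Function.Injective F) {N : Subgroup P}
    [N.Normal] (hN : (F.comp (inclusion hHG)).range = N) : (H.subgroupOf G).Normal := by
  rw [← Subgroup.comap_map_eq_self_of_injective hF (H.subgroupOf G),
    ← Subgroup.inclusion_range hHG, ← MonoidHom.range_comp, hN]
  infer_instance

theorem Equiv.Perm.eq_top_of_alternatingGroup_le {α : Type*} [Fintype α] [DecidableEq α]
    {K : Subgroup (Perm α)} (hK : alternatingGroup α ≤ K) {σ : Perm α} (hσ : σ ∈ K)
    (hsign : sign σ = -1) : K = ⊤ := by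
  refine eq_top_iff.mpr fun g _ => ?_
  rcases Int.units_eq_one_or (sign g) with h | h
  · exact hK (mem_alternatingGroup.mpr h)
  · have : g * σ⁻¹ ∈ alternatingGroup α := by
      rw [mem_alternatingGroup, map_mul, map_inv, h, hsign]; decide
    simpa using mul_mem (hK this) hσ

/-- The octahedron has vertices `0, …, 5`, the antipodal pairs being `{0, 1}`, `{2, 3}`, `{4, 5}`;
a face takes one vertex from each antipodal pair, and `facePairs j` is a pair of opposite faces. -/
def facePairs : Fin 4 → Finset (Finset (Fin 6)) :=
  ![{{0, 2, 4}, {1, 3, 5}}, {{0, 2, 5}, {1, 3, 4}}, {{0, 3, 4}, {1, 2, 5}}, {{0, 3, 5}, {1, 2, 4}}]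

theorem facePairs_injective : Function.Injective facePairs := by decide

def negVertices : Perm (Fin 6) := c[2, 3] * c[4, 5]
def recipVertices : Perm (Fin 6) := c[0, 1] * c[4, 5]
def cayleyVertices : Perm (Fin 6) := c[0, 3, 5] * c[1, 2, 4]
def mulIVertices : Perm (Fin 6) := c[2, 4, 3, 5]
def antipodeVertices : Perm (Fin 6) := c[0, 1] * c[2, 3] * c[4, 5]

def negFacePairs : Perm (Fin 4) := c[0, 3] * c[1, 2]
def recipFacePairs : Perm (Fin 4) := c[0, 2] * c[1, 3]
def cayleyFacePairs : Perm (Fin 4) := c[0, 1, 2]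
def mulIFacePairs : Perm (Fin 4) := c[0, 2, 3, 1]

theorem negVertices_smul_facePairs (j : Fin 4) :
    negVertices • facePairs j = facePairs (negFacePairs j) := by revert j; decide
theorem recipVertices_smul_facePairs (j : Fin 4) :
    recipVertices • facePairs j = facePairs (recipFacePairs j) := by revert j; decide
theorem cayleyVertices_smul_facePairs (j : Fin 4) :
    cayleyVertices • facePairs j = facePairs (cayleyFacePairs j) := by revert j; decide
theorem mulIVertices_smul_facePairs (j : Fin 4) :
    mulIVertices • facePairs j = facePairs (mulIFacePairs j) := by revert j; decide
theorem antipodeVertices_smul_facePairs (j : Fin 4) :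
    antipodeVertices • facePairs j = facePairs j := by revert j; decide

def SameFace (j : Fin 4) (u v : Fin 6) : Prop := ∃ F ∈ facePairs j, u ∈ F ∧ v ∈ F

instance (j : Fin 4) : DecidableRel (SameFace j) := fun u v =>
  inferInstanceAs (Decidable (∃ F ∈ facePairs j, u ∈ F ∧ v ∈ F))

theorem sameFace_apply_iff {g : Perm (Fin 6)} (hg : ∀ j, g • facePairs j = facePairs j)
    (j : Fin 4) (u v : Fin 6) : SameFace j (g u) (g v) ↔ SameFace j u v := by
  have key : ∀ g : Perm (Fin 6), (∀ j, g • facePairs j = facePairs j) →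
      ∀ u v, SameFace j u v → SameFace j (g u) (g v) := by
    rintro g hg u v ⟨F, hF, hu, hv⟩
    refine ⟨g • F, ?_, Finset.smul_mem_smul_finset hu, Finset.smul_mem_smul_finset hv⟩
    rw [← hg j]
    exact Finset.smul_mem_smul_finset hF
  refine ⟨fun h => ?_, key g hg u v⟩
  simpa using key g⁻¹ (fun j => by rw [inv_smul_eq_iff, hg]) _ _ h

theorem eq_zero_or_one_of_sameFace_iff {a b c : Fin 6} (hb : ∀ j, SameFace j 0 2 ↔ SameFace j a b)
    (hc : ∀ j, SameFace j 0 4 ↔ SameFace j a c) : a = 0 ∨ a = 1 := by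
  revert a b c; decide

theorem eq_of_sameFace_zero_iff {v x : Fin 6} (h : ∀ j, SameFace j 0 v ↔ SameFace j 0 x) :
    x = v := by
  revert v x; decide

theorem eq_antipodeVertices_of_sameFace_iff {v x : Fin 6}
    (h : ∀ j, SameFace j 0 v ↔ SameFace j 1 x) : x = antipodeVertices v := by
  revert v x; decide

theorem eq_one_or_antipodeVertices_of_smul_facePairs {g : Perm (Fin 6)}
    (hg : ∀ j, g • facePairs j = facePairs j) : g = 1 ∨ g = antipodeVertices := by
  have hpres : ∀ j u v, SameFace j u v ↔ SameFace j (g u) (g v) :=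
    fun j u v => (sameFace_apply_iff hg j u v).symm
  rcases eq_zero_or_one_of_sameFace_iff (hpres · 0 2) (hpres · 0 4) with h0 | h0
  · exact .inl <| Equiv.ext fun v =>
      eq_of_sameFace_zero_iff (v := v) fun j => by rw [hpres j 0 v, h0]
  · exact .inr <| Equiv.ext fun v =>
      eq_antipodeVertices_of_sameFace_iff (v := v) fun j => by rw [hpres j 0 v, h0]

def octahedralVertexGroup : Subgroup (Perm (Fin 6)) :=
  Subgroup.closure {negVertices, recipVertices, cayleyVertices, mulIVertices}

theorem octahedralVertexGroup_le_stabilizer :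
    octahedralVertexGroup ≤ MulAction.stabilizer (Perm (Fin 6)) (Set.range facePairs) := by
  refine Subgroup.closure_le _ |>.mpr ?_
  rintro _ (rfl | rfl | rfl | rfl)
  exacts [MulAction.mem_stabilizer_range_of_smul_eq negVertices_smul_facePairs,
    MulAction.mem_stabilizer_range_of_smul_eq recipVertices_smul_facePairs,
    MulAction.mem_stabilizer_range_of_smul_eq cayleyVertices_smul_facePairs,
    MulAction.mem_stabilizer_range_of_smul_eq mulIVertices_smul_facePairs]

def facePairsOfVertexPerm : octahedralVertexGroup →* Perm (Fin 4) :=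
  (MulAction.stabilizerPerm facePairs_injective).comp
    (Subgroup.inclusion octahedralVertexGroup_le_stabilizer)

theorem facePairsOfVertexPerm_eq {x : octahedralVertexGroup} {σ : Perm (Fin 6)} {τ : Perm (Fin 4)}
    (hx : (x : Perm (Fin 6)) = σ) (h : ∀ j, σ • facePairs j = facePairs (τ j)) :
    facePairsOfVertexPerm x = τ :=
  MulAction.stabilizerPerm_eq _ fun j => by rw [Subgroup.coe_inclusion, hx, h]

theorem sign_mul_sign_facePairsOfVertexPerm (x : octahedralVertexGroup) :
    sign (x : Perm (Fin 6)) * sign (facePairsOfVertexPerm x) = 1 := by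
  let χ : octahedralVertexGroup →* ℤˣ :=
    sign.comp octahedralVertexGroup.subtype * sign.comp facePairsOfVertexPerm
  have gen : ∀ σ (hσ : σ ∈ octahedralVertexGroup) τ, (∀ j, σ • facePairs j = facePairs (τ j)) →
      sign σ * sign τ = 1 → χ ⟨σ, hσ⟩ ∈ (⊥ : Subgroup ℤˣ) := fun σ hσ τ h hs => by
    show sign σ * sign (facePairsOfVertexPerm ⟨σ, hσ⟩) = 1
    rw [facePairsOfVertexPerm_eq rfl h, hs]
  have hχ : χ.range ≤ ⊥ := MonoidHom.range_le_of_closure_eq χ rfl <| by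
    rintro _ hσ (rfl | rfl | rfl | rfl)
    exacts [gen _ hσ _ negVertices_smul_facePairs (by decide),
      gen _ hσ _ recipVertices_smul_facePairs (by decide),
      gen _ hσ _ cayleyVertices_smul_facePairs (by decide),
      gen _ hσ _ mulIVertices_smul_facePairs (by decide)]
  exact Subgroup.mem_bot.mp (hχ ⟨x, rfl⟩)

theorem antipodeVertices_not_mem_octahedralVertexGroup :
    antipodeVertices ∉ octahedralVertexGroup := fun h => by
  have h1 : facePairsOfVertexPerm ⟨_, h⟩ = 1 := facePairsOfVertexPerm_eq rfl fun j => by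
    rw [one_apply]; exact antipodeVertices_smul_facePairs j
  have hsign : sign antipodeVertices * sign (facePairsOfVertexPerm ⟨_, h⟩) = 1 :=
    sign_mul_sign_facePairsOfVertexPerm ⟨_, h⟩
  rw [h1] at hsign
  exact absurd hsign (by decide)

theorem facePairsOfVertexPerm_injective : Function.Injective facePairsOfVertexPerm := by
  refine (injective_iff_map_eq_one _).mpr fun x hx => ?_
  rcases eq_one_or_antipodeVertices_of_smul_facePairs
      ((MulAction.stabilizerPerm_eq_one_iff _).mp hx) with h | h
  · exact Subtype.ext h
  · exact absurd (h ▸ x.2) antipodeVertices_not_mem_octahedralVertexGroup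

theorem alternatingGroup_le_closure_facePairs :
    alternatingGroup (Fin 4) ≤
      Subgroup.closure {negFacePairs, recipFacePairs, cayleyFacePairs} := by
  set K := Subgroup.closure {negFacePairs, recipFacePairs, cayleyFacePairs}
  have hn : negFacePairs ∈ K := Subgroup.subset_closure (by simp)
  have hr : recipFacePairs ∈ K := Subgroup.subset_closure (by simp)
  have hc : cayleyFacePairs ∈ K := Subgroup.subset_closure (by simp)
  have klein_le : ∀ v ∈ ({1, negFacePairs, recipFacePairs, negFacePairs * recipFacePairs} :
      Finset (Perm (Fin 4))), v ∈ K := by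
    simp only [Finset.mem_insert, Finset.mem_singleton]
    rintro v (rfl | rfl | rfl | rfl)
    exacts [one_mem K, hn, hr, mul_mem hn hr]
  -- the eight 3-cycles are the conjugates of `cayleyFacePairs` and its inverse by the Klein group
  have three_cycle_eq : ∀ x : Perm (Fin 4), x.support.card = 3 →
      ∃ v ∈ ({1, negFacePairs, recipFacePairs, negFacePairs * recipFacePairs} :
        Finset (Perm (Fin 4))), ∃ e ∈ ({1, 2} : Finset ℕ), x = v * cayleyFacePairs ^ e * v⁻¹ := by
    decide
  rw [← closure_three_cycles_eq_alternating, Subgroup.closure_le]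
  intro x hx
  obtain ⟨v, hv, e, -, rfl⟩ := three_cycle_eq x (card_support_eq_three_iff.mpr hx)
  exact mul_mem (mul_mem (klein_le v hv) (pow_mem hc e)) (inv_mem (klein_le v hv))

theorem closure_facePairs_eq_top :
    Subgroup.closure {negFacePairs, recipFacePairs, cayleyFacePairs, mulIFacePairs} = ⊤ :=
  Equiv.Perm.eq_top_of_alternatingGroup_le
    (alternatingGroup_le_closure_facePairs.trans <| Subgroup.closure_mono <|
      Set.insert_subset_insert <| Set.insert_subset_insert <|
        Set.singleton_subset_iff.mpr (Set.mem_insert _ _))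
    (σ := mulIFacePairs) (Subgroup.subset_closure (by simp)) (by decide)

theorem pgl_smul_mk {M : Matrix (Fin 2) (Fin 2) k} (hM : M.det ≠ 0) {v w : Fin 2 → k}
    (hv : v ≠ 0) (hw : w ≠ 0) {c : k} (hc : c • w = M *ᵥ v) :
    pgl M • Projectivization.mk k v hv = Projectivization.mk k w hw := by
  rw [pgl, dif_pos hM]
  exact (Projectivization.mk_eq_mk_iff' k _ _ _ hw).mpr ⟨c, hc⟩

theorem pgl_smul_mk_fin_two {p q r s x y x' y' c : k} (hdet : p * s - q * r ≠ 0)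
    (hv : ![x, y] ≠ 0) (hw : ![x', y'] ≠ 0) (h0 : c * x' = p * x + q * y)
    (h1 : c * y' = r * x + s * y) :
    pgl !![p, q; r, s] • Projectivization.mk k ![x, y] hv = Projectivization.mk k ![x', y'] hw :=
  pgl_smul_mk (by rwa [Matrix.det_fin_two_of]) hv hw (c := c) <| by
    rw [Matrix.smul_vec2, Matrix.mulVec_fin_two]
    exact Matrix.vec2_eq h0 h1

theorem pgl_smul_pt {p q r s a b : k} (hdet : p * s - q * r ≠ 0)
    (h : (r * a + s) * b = p * a + q) : pgl !![p, q; r, s] • pt a = pt b :=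
  pgl_smul_mk_fin_two (c := r * a + s) hdet _ _ (by linear_combination h) (by ring)

theorem pgl_smul_pt_eq_inftyPt {p q r s a : k} (hdet : p * s - q * r ≠ 0)
    (h : r * a + s = 0) : pgl !![p, q; r, s] • pt a = inftyPt :=
  pgl_smul_mk_fin_two (c := p * a + q) hdet _ _ (by ring) (by linear_combination -h)

theorem pgl_smul_inftyPt {p q r s b : k} (hdet : p * s - q * r ≠ 0) (h : r * b = p) :
    pgl !![p, q; r, s] • inftyPt = pt b :=
  pgl_smul_mk_fin_two (c := r) hdet _ _ (by linear_combination h) (by ring)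

theorem pgl_smul_inftyPt_eq_inftyPt {p q r s : k} (hdet : p * s - q * r ≠ 0) (h : r = 0) :
    pgl !![p, q; r, s] • (inftyPt : P1 k) = inftyPt :=
  pgl_smul_mk_fin_two (c := p) hdet _ _ (by ring) (by linear_combination -h)

theorem pt_injective : Function.Injective (pt : k → P1 k) := fun a b hab => by
  obtain ⟨c, hc⟩ := (Projectivization.mk_eq_mk_iff' k _ _ _ _).mp hab
  have h1 : c = 1 := by simpa using congrFun hc 1
  simpa [h1] using (congrFun hc 0).symm

theorem pt_ne_inftyPt (a : k) : pt a ≠ inftyPt := fun h => by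
  obtain ⟨c, hc⟩ := (Projectivization.mk_eq_mk_iff' k _ _ _ _).mp h
  simpa using congrFun hc 1

theorem exists_smul_eq_mulVec_of_smul_mk_eq (A : GL (Fin 2) k) {v : Fin 2 → k} (hv : v ≠ 0)
    (h : (QuotientGroup.mk A : PGL2 k) • Projectivization.mk k v hv = Projectivization.mk k v hv) :
    ∃ c : k, c • v = A.val *ᵥ v :=
  (Projectivization.mk_eq_mk_iff' k _ _ _ hv).mp h

theorem eq_one_of_smul_pt_zero_one_inftyPt {g : PGL2 k} (h0 : g • pt (0 : k) = pt 0)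
    (h1 : g • pt (1 : k) = pt 1) (hinf : g • inftyPt = (inftyPt : P1 k)) : g = 1 := by
  obtain ⟨A, rfl⟩ := QuotientGroup.mk_surjective g
  obtain ⟨c0, hc0⟩ := exists_smul_eq_mulVec_of_smul_mk_eq A _ h0
  obtain ⟨c1, hc1⟩ := exists_smul_eq_mulVec_of_smul_mk_eq A _ h1
  obtain ⟨c, hc⟩ := exists_smul_eq_mulVec_of_smul_mk_eq A _ hinf
  have h01 : A.val 0 1 = 0 := by simpa using (congrFun hc0 0).symm
  have h10 : A.val 1 0 = 0 := by simpa using (congrFun hc 1).symm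
  have h00 : A.val 0 0 = A.val 1 1 := by
    have e0 : c1 = A.val 0 0 + A.val 0 1 := by simpa using congrFun hc1 0
    have e1 : c1 = A.val 1 0 + A.val 1 1 := by simpa using congrFun hc1 1
    linear_combination e1 - e0 - h01 + h10
  have hscalar : A.val = Matrix.scalar (Fin 2) (A.val 0 0) := by
    ext i j; fin_cases i <;> fin_cases j <;> simp [h01, h10, h00]
  refine (QuotientGroup.eq_one_iff A).mpr <| Subgroup.mem_center_iff.mpr fun B => Units.ext ?_
  rw [Units.val_mul, Units.val_mul, hscalar, Matrix.scalar_commute _ (Commute.all _)]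

def octahedronVertices (i : k) : Fin 6 → P1 k := ![pt 0, inftyPt, pt 1, pt (-1), pt i, pt (-i)]

theorem octahedronVertices_injective {i : k} (hi : i ^ 2 = -1) (h2 : (2 : k) ≠ 0) :
    Function.Injective (octahedronVertices i) := by
  simp only [octahedronVertices, Matrix.vecCons, Fin.cons_injective_iff]
  simp only [Nat.succ_eq_add_one, Nat.reduceAdd, Fin.cons_vecEmpty, Fin.cons_vecCons, range_cons,
    range_empty, Set.union_empty, Set.union_singleton, Set.union_insert, Set.mem_insert_iff,
    pt_injective.eq_iff, zero_eq_neg, one_ne_zero, zero_ne_one, Set.mem_singleton_iff,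
    pt_ne_inftyPt, or_self, or_false, not_or, (pt_ne_inftyPt _).symm, not_false_eq_true, neg_inj,
    Set.mem_empty_iff_false, Function.Injective, IsEmpty.forall_iff, and_self,
    and_true, true_and]
  grind

def pglNeg (k : Type) [Field k] : PGL2 k := pgl !![1, 0; 0, -1]
def pglRecip (k : Type) [Field k] : PGL2 k := pgl !![0, 1; 1, 0]
def pglCayley (i : k) : PGL2 k := pgl !![1, i; 1, -i]
def pglMulI (i : k) : PGL2 k := pgl !![i, 0; 0, 1]

theorem pglNeg_smul_octahedronVertices (i : k) (j : Fin 6) :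
    pglNeg k • octahedronVertices i j = octahedronVertices i (negVertices j) := by
  have hdet : (1 : k) * -1 - 0 * 0 ≠ 0 := by norm_num
  fin_cases j
  exacts [pgl_smul_pt hdet (by ring), pgl_smul_inftyPt_eq_inftyPt hdet rfl,
    pgl_smul_pt hdet (by ring), pgl_smul_pt hdet (by ring), pgl_smul_pt hdet (by ring),
    pgl_smul_pt hdet (by ring)]

theorem pglRecip_smul_octahedronVertices {i : k} (hi : i ^ 2 = -1) (j : Fin 6) :
    pglRecip k • octahedronVertices i j = octahedronVertices i (recipVertices j) := by
  have hdet : (0 : k) * 0 - 1 * 1 ≠ 0 := by norm_num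
  fin_cases j
  exacts [pgl_smul_pt_eq_inftyPt hdet (by ring), pgl_smul_inftyPt hdet (by ring),
    pgl_smul_pt hdet (by ring), pgl_smul_pt hdet (by ring),
    pgl_smul_pt hdet (by linear_combination -hi), pgl_smul_pt hdet (by linear_combination -hi)]

theorem pglCayley_smul_octahedronVertices {i : k} (hi : i ^ 2 = -1) (h2 : (2 : k) ≠ 0)
    (j : Fin 6) :
    pglCayley i • octahedronVertices i j = octahedronVertices i (cayleyVertices j) := by
  have hdet : 1 * -i - i * 1 ≠ 0 := by grind
  fin_cases j
  exacts [pgl_smul_pt hdet (by ring), pgl_smul_inftyPt hdet (by ring),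
    pgl_smul_pt hdet (by linear_combination -hi), pgl_smul_pt hdet (by linear_combination hi),
    pgl_smul_pt_eq_inftyPt hdet (by ring), pgl_smul_pt hdet (by ring)]

theorem pglMulI_smul_octahedronVertices {i : k} (hi : i ^ 2 = -1) (j : Fin 6) :
    pglMulI i • octahedronVertices i j = octahedronVertices i (mulIVertices j) := by
  have hdet : i * 1 - 0 * 0 ≠ 0 := by grind
  fin_cases j
  exacts [pgl_smul_pt hdet (by ring), pgl_smul_inftyPt_eq_inftyPt hdet rfl,
    pgl_smul_pt hdet (by ring), pgl_smul_pt hdet (by ring),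
    pgl_smul_pt hdet (by linear_combination -hi), pgl_smul_pt hdet (by linear_combination hi)]

def octahedralGroup (i : k) : Subgroup (PGL2 k) :=
  Subgroup.closure {pglNeg k, pglRecip k, pglCayley i, pglMulI i}

def tetrahedralGroup (i : k) : Subgroup (PGL2 k) :=
  Subgroup.closure {pglNeg k, pglRecip k, pglCayley i}

theorem tetrahedralGroup_le_octahedralGroup (i : k) : tetrahedralGroup i ≤ octahedralGroup i :=
  Subgroup.closure_mono <| Set.insert_subset_insert <| Set.insert_subset_insert <|
    Set.singleton_subset_iff.mpr (Set.mem_insert _ _)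

variable {i : k}

theorem octahedralGroup_le_stabilizer (hi : i ^ 2 = -1) (h2 : (2 : k) ≠ 0) :
    octahedralGroup i ≤ MulAction.stabilizer (PGL2 k) (Set.range (octahedronVertices i)) := by
  refine Subgroup.closure_le _ |>.mpr ?_
  rintro _ (rfl | rfl | rfl | rfl)
  exacts [MulAction.mem_stabilizer_range_of_smul_eq (pglNeg_smul_octahedronVertices i),
    MulAction.mem_stabilizer_range_of_smul_eq (pglRecip_smul_octahedronVertices hi),
    MulAction.mem_stabilizer_range_of_smul_eq (pglCayley_smul_octahedronVertices hi h2),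
    MulAction.mem_stabilizer_range_of_smul_eq (pglMulI_smul_octahedronVertices hi)]

def vertexPerm (hi : i ^ 2 = -1) (h2 : (2 : k) ≠ 0) :
    octahedralGroup i →* Perm (Fin 6) :=
  (MulAction.stabilizerPerm (octahedronVertices_injective hi h2)).comp
    (Subgroup.inclusion (octahedralGroup_le_stabilizer hi h2))

theorem vertexPerm_eq {hi : i ^ 2 = -1} {h2 : (2 : k) ≠ 0} {x : octahedralGroup i} {g : PGL2 k}
    {σ : Perm (Fin 6)} (hx : (x : PGL2 k) = g)
    (h : ∀ j, g • octahedronVertices i j = octahedronVertices i (σ j)) :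
    vertexPerm hi h2 x = σ :=
  MulAction.stabilizerPerm_eq _ fun j => by rw [Subgroup.coe_inclusion, hx, h]

theorem vertexPerm_injective (hi : i ^ 2 = -1) (h2 : (2 : k) ≠ 0) :
    Function.Injective (vertexPerm hi h2) := by
  refine (injective_iff_map_eq_one _).mpr fun x hx => Subtype.ext ?_
  have hfix := (MulAction.stabilizerPerm_eq_one_iff _).mp hx
  exact eq_one_of_smul_pt_zero_one_inftyPt (hfix 0) (hfix 2) (hfix 1)

theorem range_vertexPerm_le (hi : i ^ 2 = -1) (h2 : (2 : k) ≠ 0) :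
    (vertexPerm hi h2).range ≤ octahedralVertexGroup := by
  refine MonoidHom.range_le_of_closure_eq (vertexPerm hi h2) rfl ?_
  have mem : ∀ σ ∈ ({negVertices, recipVertices, cayleyVertices, mulIVertices} :
      Set (Perm (Fin 6))), σ ∈ octahedralVertexGroup := fun σ hσ => Subgroup.subset_closure hσ
  rintro _ _ (rfl | rfl | rfl | rfl)
  · rw [vertexPerm_eq rfl (pglNeg_smul_octahedronVertices i)]; exact mem _ (by simp)
  · rw [vertexPerm_eq rfl (pglRecip_smul_octahedronVertices hi)]; exact mem _ (by simp)
  · rw [vertexPerm_eq rfl (pglCayley_smul_octahedronVertices hi h2)]; exact mem _ (by simp)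
  · rw [vertexPerm_eq rfl (pglMulI_smul_octahedronVertices hi)]; exact mem _ (by simp)

def facePairsPerm (hi : i ^ 2 = -1) (h2 : (2 : k) ≠ 0) :
    octahedralGroup i →* Perm (Fin 4) :=
  facePairsOfVertexPerm.comp <|
    (vertexPerm hi h2).codRestrict _ fun x => range_vertexPerm_le hi h2 ⟨x, rfl⟩

theorem facePairsPerm_injective (hi : i ^ 2 = -1) (h2 : (2 : k) ≠ 0) :
    Function.Injective (facePairsPerm hi h2) :=
  facePairsOfVertexPerm_injective.comp fun _ _ h =>
    vertexPerm_injective hi h2 (congrArg Subtype.val h)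

theorem facePairsPerm_eq {hi : i ^ 2 = -1} {h2 : (2 : k) ≠ 0} {x : octahedralGroup i}
    {g : PGL2 k} {σ : Perm (Fin 6)} {τ : Perm (Fin 4)} (hx : (x : PGL2 k) = g)
    (hg : ∀ j, g • octahedronVertices i j = octahedronVertices i (σ j))
    (hσ : ∀ j, σ • facePairs j = facePairs (τ j)) : facePairsPerm hi h2 x = τ :=
  facePairsOfVertexPerm_eq (vertexPerm_eq hx hg) hσ

theorem facePairsPerm_pglNeg (hi : i ^ 2 = -1) (h2 : (2 : k) ≠ 0)
    (h : pglNeg k ∈ octahedralGroup i) : facePairsPerm hi h2 ⟨_, h⟩ = negFacePairs :=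
  facePairsPerm_eq rfl (pglNeg_smul_octahedronVertices i) negVertices_smul_facePairs

theorem facePairsPerm_pglRecip (hi : i ^ 2 = -1) (h2 : (2 : k) ≠ 0)
    (h : pglRecip k ∈ octahedralGroup i) : facePairsPerm hi h2 ⟨_, h⟩ = recipFacePairs :=
  facePairsPerm_eq rfl (pglRecip_smul_octahedronVertices hi) recipVertices_smul_facePairs

theorem facePairsPerm_pglCayley (hi : i ^ 2 = -1) (h2 : (2 : k) ≠ 0)
    (h : pglCayley i ∈ octahedralGroup i) : facePairsPerm hi h2 ⟨_, h⟩ = cayleyFacePairs :=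
  facePairsPerm_eq rfl (pglCayley_smul_octahedronVertices hi h2) cayleyVertices_smul_facePairs

theorem facePairsPerm_pglMulI (hi : i ^ 2 = -1) (h2 : (2 : k) ≠ 0)
    (h : pglMulI i ∈ octahedralGroup i) : facePairsPerm hi h2 ⟨_, h⟩ = mulIFacePairs :=
  facePairsPerm_eq rfl (pglMulI_smul_octahedronVertices hi) mulIVertices_smul_facePairs

theorem range_facePairsPerm (hi : i ^ 2 = -1) (h2 : (2 : k) ≠ 0) :
    (facePairsPerm hi h2).range = ⊤ := by
  have mem : ∀ g ∈ ({pglNeg k, pglRecip k, pglCayley i, pglMulI i} : Set (PGL2 k)),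
      g ∈ octahedralGroup i := fun g hg => Subgroup.subset_closure hg
  rw [eq_top_iff, ← closure_facePairs_eq_top, Subgroup.closure_le]
  rintro _ (rfl | rfl | rfl | rfl)
  exacts [⟨_, facePairsPerm_pglNeg hi h2 (mem _ (by simp))⟩,
    ⟨_, facePairsPerm_pglRecip hi h2 (mem _ (by simp))⟩,
    ⟨_, facePairsPerm_pglCayley hi h2 (mem _ (by simp))⟩,
    ⟨_, facePairsPerm_pglMulI hi h2 (mem _ (by simp))⟩]

theorem range_facePairsPerm_comp_inclusion (hi : i ^ 2 = -1) (h2 : (2 : k) ≠ 0) :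
    ((facePairsPerm hi h2).comp
      (Subgroup.inclusion (tetrahedralGroup_le_octahedralGroup i))).range =
        alternatingGroup (Fin 4) := by
  have mem : ∀ g ∈ ({pglNeg k, pglRecip k, pglCayley i} : Set (PGL2 k)),
      g ∈ tetrahedralGroup i := fun g hg => Subgroup.subset_closure hg
  refine le_antisymm (MonoidHom.range_le_of_closure_eq _ rfl ?_) <|
    alternatingGroup_le_closure_facePairs.trans <| Subgroup.closure_le _ |>.mpr ?_
  · rintro _ hg (rfl | rfl | rfl)
    · show facePairsPerm hi h2 ⟨_, _⟩ ∈ _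
      rw [facePairsPerm_pglNeg, mem_alternatingGroup]; decide
    · show facePairsPerm hi h2 ⟨_, _⟩ ∈ _
      rw [facePairsPerm_pglRecip, mem_alternatingGroup]; decide
    · show facePairsPerm hi h2 ⟨_, _⟩ ∈ _
      rw [facePairsPerm_pglCayley, mem_alternatingGroup]; decide
  · rintro _ (rfl | rfl | rfl)
    exacts [⟨⟨_, mem (pglNeg k) (by simp)⟩, facePairsPerm_pglNeg hi h2 _⟩,
      ⟨⟨_, mem (pglRecip k) (by simp)⟩, facePairsPerm_pglRecip hi h2 _⟩,
      ⟨⟨_, mem (pglCayley i) (by simp)⟩, facePairsPerm_pglCayley hi h2 _⟩]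

theorem stmt_9_general (k : Type) [Field k] (h2 : (2 : k) ≠ 0)
    (i : k) (hi : i^2 = -1)
    (G H : Subgroup (PGL2 k))
    (hG : G = Subgroup.closure
      {pgl !![(1:k), 0; 0, -1], pgl !![(0:k), 1; 1, 0], pgl !![(1:k), i; 1, -i],
        pgl !![i, 0; 0, 1]})
    (hH : H = Subgroup.closure
      {pgl !![(1:k), 0; 0, -1], pgl !![(0:k), 1; 1, 0], pgl !![(1:k), i; 1, -i]}) :
    (Nonempty (G ≃* Equiv.Perm (Fin 4)) ∧ Nat.card G = 24) ∧
    H ≤ G ∧ (H.subgroupOf G).Normal ∧ Nonempty (H ≃* alternatingGroup (Fin 4)) := by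
  obtain rfl : G = octahedralGroup i := hG
  obtain rfl : H = tetrahedralGroup i := hH
  have hHG := tetrahedralGroup_le_octahedralGroup i
  have hF := facePairsPerm_injective hi h2
  have hFH := range_facePairsPerm_comp_inclusion hi h2
  let e : octahedralGroup i ≃* Perm (Fin 4) :=
    MulEquiv.ofBijective _ ⟨hF, MonoidHom.range_eq_top.mp (range_facePairsPerm hi h2)⟩
  refine ⟨⟨⟨e⟩, by rw [Nat.card_congr e.toEquiv, Nat.card_perm, Nat.card_fin]; rfl⟩, hHG,
    Subgroup.normal_subgroupOf_of_range_comp_inclusion hHG hF hFH, ⟨?_⟩⟩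
  exact (MonoidHom.ofInjective (f := (facePairsPerm hi h2).comp (Subgroup.inclusion hHG))
    (hF.comp (Subgroup.inclusion_injective hHG))).trans (MulEquiv.subgroupCongr hFH)

/-- Let `k` be algebraically closed of characteristic ≠ 2 and `i` a square root
of `-1`. The subgroup `G` of `PGL(2,k)` generated by the classes of `[[1,0],[0,-1]]`,
`[[0,1],[1,0]]`, `[[1,i],[1,-i]]` and `[[i,0],[0,1]]` is isomorphic to the symmetric group
`S₄` of order 24, and the subgroup `H` generated by the first three matrices is a normal
subgroup of `G` isomorphic to `A₄`. -/
theorem stmt_9 (k : Type) [Field k] [IsAlgClosed k] (h2 : (2 : k) ≠ 0)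
    (i : k) (hi : i^2 = -1)
    (G H : Subgroup (PGL2 k))
    (hG : G = Subgroup.closure
      {pgl !![(1:k), 0; 0, -1], pgl !![(0:k), 1; 1, 0], pgl !![(1:k), i; 1, -i],
        pgl !![i, 0; 0, 1]})
    (hH : H = Subgroup.closure
      {pgl !![(1:k), 0; 0, -1], pgl !![(0:k), 1; 1, 0], pgl !![(1:k), i; 1, -i]}) :
    (Nonempty (G ≃* Equiv.Perm (Fin 4)) ∧ Nat.card G = 24) ∧
    H ≤ G ∧ (H.subgroupOf G).Normal ∧ Nonempty (H ≃* alternatingGroup (Fin 4)) :=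
  stmt_9_general k h2 i hi G H hG hH

end
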